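/- Let F be a CNF formula over variables q1,…,qn partitioned into k parts by part:Φ→{1,…,k} with targets tg:{1,…,k}→ℕ. In the 1-safe Petri net constructed from this p-Pw-Sat instance, the target marking (a token exactly in places s and g) is reachable from the initial marking iff there is a satisfying assignment of F that sets exactly tg(r) variables to true in each part r. -/

import Mathlib

/-- A Petri net: places `P`, transitions `T`, incidence functions. -/
structure PetriNet (P T : Type) where
  Pre : P → T → ℕ
  Post : P → T → ℕ

variable {P T : Type}

def enabled (N : PetriNet P T) (M : P → ℕ) (t : T) : Prop := ∀ p, N.Pre p t ≤ M p

def fire (N : PetriNet P T) (M : P → ℕ) (t : T) : P → ℕ :=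
  fun p => M p - N.Pre p t + N.Post p t

def step (N : PetriNet P T) (M M' : P → ℕ) : Prop :=
  ∃ t, enabled N M t ∧ M' = fire N M t

def reachable (N : PetriNet P T) (M0 M : P → ℕ) : Prop :=
  Relation.ReflTransGen (step N) M0 M

/-- `1`-safety: every reachable marking has at most one token per place. -/
def oneSafe (N : PetriNet P T) (M0 : P → ℕ) : Prop :=
  ∀ M, reachable N M0 M → ∀ p, M p ≤ 1

def incident (N : PetriNet P T) (p : P) (t : T) : Prop := 1 ≤ N.Pre p t + N.Post p t


/-- Places of the net constructed from a `p-Pw-Sat` instance with `n` variables,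
`m` clauses and `k` parts. -/
inductive Pl (n m k : ℕ) : Type
  | q (i : Fin n) | x (i : Fin n) | xb (i : Fin n)
  | tup (r : Fin k) | fup (r : Fin k)
  | tu (r : Fin k) (c : ℕ) | fl (r : Fin k) (c : ℕ)
  | cl (j : Fin (m + 1)) | s | g
deriving DecidableEq

/-- Transitions of the constructed net. -/
inductive Tr (n m k : ℕ) : Type
  | t (i : Fin n) | f (i : Fin n) | td (i : Fin n) | fd (i : Fin n)
  | tc (r : Fin k) (c : ℕ) | fc (r : Fin k) (c : ℕ)
  | sat (j : Fin m) (i : Fin n) (b : Bool)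
  | fin
deriving DecidableEq

variable {n m k : ℕ}

/-- The number of variables in part `r`. -/
def numIn (part : Fin n → Fin k) (r : Fin k) : ℕ :=
  (Finset.univ.filter fun i => part i = r).card

/-- The place holding the `x`/`x̄` token of the literal `(i, b)`. -/
def litPl (i : Fin n) (b : Bool) : Pl n m k := if b then .x i else .xb i

/-- Input incidence of the constructed net. A transition that does not correspond to
a legal part of the construction (a clause-check for a literal not in the clause, or a
counter step beyond the end of a chain) is blocked by requiring two tokens at a place,
which never happens in the (1-safe) net. -/
def satPre (clause : Fin m → Finset (Fin n × Bool)) (part : Fin n → Fin k)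
    (tg : Fin k → ℕ) : Pl n m k → Tr n m k → ℕ := fun p τ =>
  match τ with
  | .t i => if p = .q i ∨ p = .s then 1 else 0
  | .f i => if p = .q i ∨ p = .s then 1 else 0
  | .td i => if p = .x i then 1 else 0
  | .fd i => if p = .xb i then 1 else 0
  | .tc r c => if c < tg r then (if p = .tup r ∨ p = .tu r c then 1 else 0)
      else (if p = .tu r c then 2 else 0)
  | .fc r c => if c < numIn part r - tg r then (if p = .fup r ∨ p = .fl r c then 1 else 0)
      else (if p = .fl r c then 2 else 0)
  | .sat j i b => if (i, b) ∈ clause j then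
        (if p = .cl j.castSucc ∨ p = litPl i b then 1 else 0)
      else (if p = .cl j.castSucc then 2 else 0)
  | .fin => if p = .cl (Fin.last m) ∨ (∃ r, p = .tu r (tg r)) ∨
        (∃ r, p = .fl r (numIn part r - tg r)) then 1 else 0

/-- Output incidence of the constructed net. -/
def satPost (clause : Fin m → Finset (Fin n × Bool)) (part : Fin n → Fin k)
    (tg : Fin k → ℕ) : Pl n m k → Tr n m k → ℕ := fun p τ =>
  match τ with
  | .t i => if p = .x i ∨ p = .tup (part i) then 1 else 0
  | .f i => if p = .xb i ∨ p = .fup (part i) then 1 else 0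
  | .td _ => 0
  | .fd _ => 0
  | .tc r c => if c < tg r then (if p = .tu r (c + 1) ∨ p = .s then 1 else 0) else 0
  | .fc r c => if c < numIn part r - tg r then
        (if p = .fl r (c + 1) ∨ p = .s then 1 else 0) else 0
  | .sat j i b => if (i, b) ∈ clause j then
        (if p = .cl j.succ ∨ p = litPl i b then 1 else 0) else 0
  | .fin => if p = .g then 1 else 0

/-- The Petri net constructed from the `p-Pw-Sat` instance. -/
def satNet (clause : Fin m → Finset (Fin n × Bool)) (part : Fin n → Fin k)
    (tg : Fin k → ℕ) : PetriNet (Pl n m k) (Tr n m k) :=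
  ⟨satPre clause part tg, satPost clause part tg⟩

/-- The initial marking: one token in each `q i`, in `s`, in each counter start
`tu r 0`, `fl r 0`, and in the first clause place. -/
def satM0 : Pl n m k → ℕ := fun p =>
  match p with
  | .q _ => 1
  | .s => 1
  | .tu _ c => if c = 0 then 1 else 0
  | .fl _ c => if c = 0 then 1 else 0
  | .cl j => if j = 0 then 1 else 0
  | _ => 0

/-- The final marking to be reached: a token exactly in `s` and `g`. -/
def satMtgt : Pl n m k → ℕ := fun p =>
  match p with
  | .s => 1
  | .g => 1
  | _ => 0

/-- The `p-Pw-Sat` instance is a Yes-instance: some assignment satisfies every clause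
and sets exactly `tg r` variables to true in each part `r`. -/
def GoodAssign (clause : Fin m → Finset (Fin n × Bool)) (part : Fin n → Fin k)
    (tg : Fin k → ℕ) : Prop :=
  ∃ a : Fin n → Bool,
    (∀ j : Fin m, ∃ l ∈ clause j, a l.1 = l.2) ∧
    (∀ r : Fin k, (Finset.univ.filter fun i => part i = r ∧ a i = true).card = tg r)

/-! Every reachable marking is the marking of a configuration: a partial assignment in which
each assigned variable still holds its `x`/`x̄` token or has had it deleted (its value is
remembered either way), the positions on the counter chains and on the clause chain, the token
taken from `s` if it waits in some `t↑`/`f↑`, and whether the final transition has fired.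
Firing keeps two invariants: the number of variables of part `r` set to `b` is the position on
the `(b, r)` counter chain, plus one if the waiting token came from such a variable; and every
clause the clause chain has passed contains a literal true under the remembered values. When `g`
is marked the counter chains are at their ends, so the remembered values satisfy the formula and
meet every target. Conversely, a good assignment is played out variable by variable (each
assignment followed by one counter step), then clause by clause; then the `x`/`x̄` tokens are
deleted and the final transition fires. -/

namespace SatNet

inductive VarState
  | unset | live (b : Bool) | deleted (b : Bool)
deriving DecidableEq

def VarState.value : VarState → Option Bool
  | unset => none
  | live b | deleted b => some b

@[simp] theorem VarState.value_unset : unset.value = none := rfl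
@[simp] theorem VarState.value_live (b : Bool) : (live b).value = some b := rfl
@[simp] theorem VarState.value_deleted (b : Bool) : (deleted b).value = some b := rfl

/-- `pending = some (b, r)` when the token of `s` waits in `t↑ r` (`b = true`) or `f↑ r`;
`ctr (b, r)` is the position of the token on the chain `tu r` (`b = true`) or `fl r`. -/
structure Cfg (n m k : ℕ) where
  var : Fin n → VarState
  ctr : Bool × Fin k → ℕ
  pending : Option (Bool × Fin k)
  clausePos : Fin (m + 1)
  finished : Bool

def numAssigned (part : Fin n → Fin k) (v : Fin n → VarState) (b : Bool) (r : Fin k) : ℕ :=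
  (Finset.univ.filter fun i => part i = r ∧ (v i).value = some b).card

variable {clause : Fin m → Finset (Fin n × Bool)} {part : Fin n → Fin k} {tg : Fin k → ℕ}

theorem numAssigned_update_live {v : Fin n → VarState} {i : Fin n} (hv : v i = .unset)
    (b' b : Bool) (r : Fin k) :
    numAssigned part (Function.update v i (.live b')) b r =
      numAssigned part v b r + if part i = r ∧ b' = b then 1 else 0 := by
  unfold numAssigned
  split_ifs with hib
  · rw [← Finset.card_insert_of_notMem (a := i) (by simp [hv])]
    congr 1
    ext x
    by_cases hx : x = i <;> simp [hx, hv, hib]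
  · rw [add_zero]
    congr 1
    ext x
    by_cases hx : x = i <;> simp [hx, hv]
    grind

theorem value_update_deleted {v : Fin n → VarState} {i : Fin n} {b : Bool} (hv : v i = .live b)
    (x : Fin n) : (Function.update v i (.deleted b) x).value = (v x).value := by
  by_cases hx : x = i <;> simp [hx, hv]

theorem numAssigned_update_deleted {v : Fin n → VarState} {i : Fin n} {b : Bool}
    (hv : v i = .live b) :
    numAssigned part (Function.update v i (.deleted b)) = numAssigned part v := by
  funext b' r
  unfold numAssigned
  simp only [value_update_deleted hv]

/-- The length of the counter chain `tu r` (for `(true, r)`) or `fl r` (for `(false, r)`). -/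
def quota (part : Fin n → Fin k) (tg : Fin k → ℕ) : Bool × Fin k → ℕ
  | (true, r) => tg r
  | (false, r) => numIn part r - tg r

namespace Cfg

def marking (C : Cfg n m k) : Pl n m k → ℕ
  | .q i => if C.var i = .unset then 1 else 0
  | .x i => if C.var i = .live true then 1 else 0
  | .xb i => if C.var i = .live false then 1 else 0
  | .tup r => if C.pending = some (true, r) then 1 else 0
  | .fup r => if C.pending = some (false, r) then 1 else 0
  | .tu r c => if C.finished = false ∧ C.ctr (true, r) = c then 1 else 0
  | .fl r c => if C.finished = false ∧ C.ctr (false, r) = c then 1 else 0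
  | .cl j => if C.finished = false ∧ C.clausePos = j then 1 else 0
  | .s => if C.pending = none then 1 else 0
  | .g => if C.finished then 1 else 0

def CanFire (clause : Fin m → Finset (Fin n × Bool)) (part : Fin n → Fin k)
    (tg : Fin k → ℕ) (C : Cfg n m k) : Tr n m k → Prop
  | .t i | .f i => C.var i = .unset ∧ C.pending = none
  | .td i => C.var i = .live true
  | .fd i => C.var i = .live false
  | .tc r c => c < quota part tg (true, r) ∧ C.pending = some (true, r) ∧
      C.finished = false ∧ C.ctr (true, r) = c
  | .fc r c => c < quota part tg (false, r) ∧ C.pending = some (false, r) ∧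
      C.finished = false ∧ C.ctr (false, r) = c
  | .sat j i b => (i, b) ∈ clause j ∧ C.var i = .live b ∧ C.finished = false ∧
      C.clausePos = j.castSucc
  | .fin => C.finished = false ∧ C.clausePos = Fin.last m ∧ ∀ br, C.ctr br = quota part tg br

def next (part : Fin n → Fin k) (C : Cfg n m k) : Tr n m k → Cfg n m k
  | .t i => { C with var := Function.update C.var i (.live true), pending := some (true, part i) }
  | .f i => { C with var := Function.update C.var i (.live false), pending := some (false, part i) }
  | .td i => { C with var := Function.update C.var i (.deleted true) }
  | .fd i => { C with var := Function.update C.var i (.deleted false) }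
  | .tc r c => { C with ctr := Function.update C.ctr (true, r) (c + 1), pending := none }
  | .fc r c => { C with ctr := Function.update C.ctr (false, r) (c + 1), pending := none }
  | .sat j _ _ => { C with clausePos := j.succ }
  | .fin => { C with finished := true }

theorem fire_marking {C : Cfg n m k} {τ : Tr n m k} (h : C.CanFire clause part tg τ) :
    fire (satNet clause part tg) C.marking τ = (C.next part τ).marking := by
  funext p
  cases τ <;> simp only [CanFire, quota, Prod.forall, Bool.forall_bool] at h <;> cases p <;>
    simp [fire, satNet, satPre, satPost, marking, next, litPl, Function.update_apply] <;> grind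

/-- Transitions with an input arc of weight `2` are never enabled, since configuration markings
are `0`/`1`-valued. -/
theorem enabled_marking_iff {C : Cfg n m k} {τ : Tr n m k} :
    enabled (satNet clause part tg) C.marking τ ↔ C.CanFire clause part tg τ := by
  refine ⟨fun h => ?_, fun h p => ?_⟩
  · cases τ with
    | t i | f i =>
      have := h (.q i); have := h .s
      simp [satNet, satPre, marking, CanFire] at *; grind
    | td i | fd i =>
      have := h (.x i); have := h (.xb i)
      simp [satNet, satPre, marking, CanFire] at *; grind
    | tc r c =>
      have := h (.tup r); have := h (.tu r c)
      simp [satNet, satPre, marking, CanFire, quota] at *; grind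
    | fc r c =>
      have := h (.fup r); have := h (.fl r c)
      simp [satNet, satPre, marking, CanFire, quota] at *; grind
    | sat j i b =>
      have := h (.cl j.castSucc); have := h (litPl i b)
      cases b <;> simp [satNet, satPre, marking, CanFire, litPl] at * <;> grind
    | fin =>
      have := h (.cl (Fin.last m)); have := fun r => h (.tu r (tg r))
      have := fun r => h (.fl r (numIn part r - tg r))
      simp [satNet, satPre, marking, CanFire, quota, Prod.forall, Bool.forall_bool] at *; grind
  · cases τ <;> simp only [CanFire, quota, Prod.forall, Bool.forall_bool] at h <;> cases p <;>
      simp [satNet, satPre, marking, litPl] <;> grind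

theorem reachable_next {C : Cfg n m k} {τ : Tr n m k} (h : C.CanFire clause part tg τ) :
    reachable (satNet clause part tg) C.marking (C.next part τ).marking :=
  Relation.ReflTransGen.single ⟨τ, enabled_marking_iff.2 h, (fire_marking h).symm⟩

structure Consistent (clause : Fin m → Finset (Fin n × Bool)) (part : Fin n → Fin k)
    (tg : Fin k → ℕ) (C : Cfg n m k) : Prop where
  count : ∀ b r,
    numAssigned part C.var b r = C.ctr (b, r) + if C.pending = some (b, r) then 1 else 0
  clauses : ∀ j : Fin m, j.castSucc < C.clausePos →
    ∃ l ∈ clause j, (C.var l.1).value = some l.2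
  finished : C.finished = true → C.clausePos = Fin.last m ∧ ∀ r, C.ctr (true, r) = tg r

theorem Consistent.next {C : Cfg n m k} {τ : Tr n m k} (hC : C.Consistent clause part tg)
    (h : C.CanFire clause part tg τ) : (C.next part τ).Consistent clause part tg := by
  cases τ with
  | t i | f i =>
    obtain ⟨hv, hp⟩ := h
    refine ⟨fun b r => ?_, fun j hj => ?_, hC.finished⟩
    · dsimp only [Cfg.next]
      rw [numAssigned_update_live hv, hC.count, hp]
      simp
      grind
    · obtain ⟨l, hl, hlv⟩ := hC.clauses j hj
      refine ⟨l, hl, ?_⟩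
      by_cases hli : l.1 = i <;> simp_all [Cfg.next]
  | td i | fd i =>
    simp only [CanFire] at h
    refine ⟨fun b r => ?_, fun j hj => ?_, hC.finished⟩
    · dsimp only [Cfg.next]
      rw [numAssigned_update_deleted h]
      exact hC.count b r
    · obtain ⟨l, hl, hlv⟩ := hC.clauses j hj
      exact ⟨l, hl, by simpa [Cfg.next, value_update_deleted h] using hlv⟩
  | tc r c | fc r c =>
    obtain ⟨-, hp, hf, rfl⟩ := h
    refine ⟨fun b r' => ?_, hC.clauses, by simp [Cfg.next, hf]⟩
    have := hC.count b r'
    simp only [Cfg.next, Function.update_apply]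
    grind
  | sat j i b =>
    obtain ⟨hl, hv, hf, hj⟩ := h
    refine ⟨hC.count, fun j' hj' => ?_, by simp [Cfg.next, hf]⟩
    rcases (Fin.castSucc_lt_succ_iff.mp hj').lt_or_eq with hlt | rfl
    · exact hC.clauses j' (hj ▸ Fin.castSucc_lt_castSucc_iff.mpr hlt)
    · exact ⟨(i, b), hl, by simp [Cfg.next, hv]⟩
  | fin =>
    obtain ⟨-, hj, hr⟩ := h
    exact ⟨hC.count, hC.clauses, fun _ => ⟨hj, fun r => hr (true, r)⟩⟩

def init : Cfg n m k := ⟨fun _ => .unset, fun _ => 0, none, 0, false⟩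

theorem init_marking : (init : Cfg n m k).marking = satM0 := by
  funext p
  cases p <;> simp [marking, init, satM0, eq_comm]

theorem init_consistent : (init : Cfg n m k).Consistent clause part tg :=
  ⟨fun b r => by simp [numAssigned, init], fun j hj => absurd hj (Fin.not_lt_zero _),
    Bool.false_ne_true.elim⟩

theorem exists_consistent_of_reachable {M : Pl n m k → ℕ}
    (h : reachable (satNet clause part tg) satM0 M) :
    ∃ C : Cfg n m k, C.Consistent clause part tg ∧ C.marking = M := by
  induction h with
  | refl => exact ⟨init, init_consistent, init_marking⟩
  | tail _ hstep ih =>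
    obtain ⟨C, hC, rfl⟩ := ih
    obtain ⟨τ, hen, rfl⟩ := hstep
    have hτ := enabled_marking_iff.1 hen
    exact ⟨C.next part τ, hC.next hτ, (fire_marking hτ).symm⟩

theorem Consistent.goodAssign {C : Cfg n m k} (hC : C.Consistent clause part tg)
    (hM : C.marking = satMtgt) : GoodAssign clause part tg := by
  have hfin : C.finished = true := by simpa [marking, satMtgt] using congrFun hM .g
  have hpend : C.pending = none := by simpa [marking, satMtgt] using congrFun hM .s
  obtain ⟨hpos, hctr⟩ := hC.finished hfin
  refine ⟨fun i => (C.var i).value = some true, fun j => ?_, fun r => ?_⟩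
  · obtain ⟨l, hl, hv⟩ := hC.clauses j (hpos ▸ Fin.castSucc_lt_last j)
    exact ⟨l, hl, by cases hb : l.2 <;> simp_all⟩
  · have hcount := hC.count true r
    simp only [hpend, hctr r, reduceCtorEq, if_false, add_zero] at hcount
    rw [← hcount]
    unfold numAssigned
    simp

theorem reachable_assign {C : Cfg n m k} {i : Fin n} (b : Bool) (hv : C.var i = .unset)
    (hp : C.pending = none) (hf : C.finished = false)
    (hc : C.ctr (b, part i) < quota part tg (b, part i)) :
    reachable (satNet clause part tg) C.marking
      { C with var := Function.update C.var i (.live b),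
               ctr := Function.update C.ctr (b, part i) (C.ctr (b, part i) + 1),
               pending := none }.marking := by
  cases b
  · exact Relation.ReflTransGen.trans (reachable_next (τ := .f i) ⟨hv, hp⟩)
      (reachable_next (τ := .fc (part i) _) ⟨hc, rfl, hf, rfl⟩)
  · exact Relation.ReflTransGen.trans (reachable_next (τ := .t i) ⟨hv, hp⟩)
      (reachable_next (τ := .tc (part i) _) ⟨hc, rfl, hf, rfl⟩)

theorem reachable_delete {C : Cfg n m k} {i : Fin n} {b : Bool} (hv : C.var i = .live b) :
    reachable (satNet clause part tg) C.marking
      { C with var := Function.update C.var i (.deleted b) }.marking := by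
  cases b
  · exact reachable_next (τ := .fd i) hv
  · exact reachable_next (τ := .td i) hv

end Cfg

def ofAssignment (part : Fin n → Fin k) (a : Fin n → Bool) (S D : Finset (Fin n))
    (j : Fin (m + 1)) : Cfg n m k where
  var i := if i ∈ D then .deleted (a i) else if i ∈ S then .live (a i) else .unset
  ctr br := (S.filter fun i => part i = br.2 ∧ a i = br.1).card
  pending := none
  clausePos := j
  finished := false

variable {a : Fin n → Bool}

theorem ofAssignment_empty_marking :
    (ofAssignment part a ∅ ∅ 0 : Cfg n m k).marking = satM0 := by
  funext p
  cases p <;> simp [Cfg.marking, ofAssignment, satM0, eq_comm]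

theorem reachable_ofAssignment_insert_live
    (hq : ∀ br, (Finset.univ.filter fun i => part i = br.2 ∧ a i = br.1).card =
      quota part tg br)
    {S : Finset (Fin n)} {i : Fin n} (hi : i ∉ S) (j : Fin (m + 1)) :
    reachable (satNet clause part tg) (ofAssignment part a S ∅ j).marking
      (ofAssignment part a (insert i S) ∅ j).marking := by
  have hlt :
      (S.filter fun x => part x = part i ∧ a x = a i).card < quota part tg (a i, part i) := by
    rw [← hq]
    exact Finset.card_lt_card ((Finset.ssubset_iff_of_subset
      (Finset.filter_subset_filter _ (Finset.subset_univ S))).2 ⟨i, by simp, by simp [hi]⟩)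
  convert Cfg.reachable_assign (C := ofAssignment part a S ∅ j) (a i) (by simp [ofAssignment, hi])
    rfl rfl hlt using 2
  simp only [ofAssignment, Cfg.mk.injEq, and_true]
  refine ⟨funext fun x => ?_, funext fun br => ?_⟩
  · by_cases hx : x = i <;> simp [hx]
  · rw [Finset.filter_insert]
    by_cases hbr : br = (a i, part i)
    · subst hbr
      simp [hi]
    · rw [Function.update_of_ne hbr, if_neg fun h => hbr (Prod.ext h.2.symm h.1.symm)]

theorem reachable_ofAssignment_live
    (hq : ∀ br, (Finset.univ.filter fun i => part i = br.2 ∧ a i = br.1).card =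
      quota part tg br)
    (S : Finset (Fin n)) :
    reachable (satNet clause part tg) (ofAssignment part a ∅ ∅ 0 : Cfg n m k).marking
      (ofAssignment part a S ∅ 0).marking := by
  induction S using Finset.induction_on with
  | empty => exact Relation.ReflTransGen.refl
  | insert i S hi ih =>
    exact Relation.ReflTransGen.trans ih (reachable_ofAssignment_insert_live hq hi 0)

theorem reachable_ofAssignment_clausePos (hsat : ∀ j : Fin m, ∃ l ∈ clause j, a l.1 = l.2)
    (j : Fin (m + 1)) :
    reachable (satNet clause part tg) (ofAssignment part a Finset.univ ∅ 0).marking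
      (ofAssignment part a Finset.univ ∅ j).marking := by
  induction j using Fin.induction with
  | zero => exact Relation.ReflTransGen.refl
  | succ j ih =>
    obtain ⟨l, hl, hla⟩ := hsat j
    exact Relation.ReflTransGen.trans ih
      (Cfg.reachable_next (τ := .sat j l.1 l.2) ⟨hl, by simp [ofAssignment, hla], rfl, rfl⟩)

theorem reachable_ofAssignment_insert_deleted {D : Finset (Fin n)} {i : Fin n} (hi : i ∉ D)
    (j : Fin (m + 1)) :
    reachable (satNet clause part tg) (ofAssignment part a Finset.univ D j).marking
      (ofAssignment part a Finset.univ (insert i D) j).marking := by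
  convert Cfg.reachable_delete (C := ofAssignment part a Finset.univ D j) (i := i) (b := a i)
    (by simp [ofAssignment, hi]) using 2
  simp only [ofAssignment, Cfg.mk.injEq, and_true]
  funext x
  by_cases hx : x = i <;> simp [hx]

theorem reachable_ofAssignment_deleted (D : Finset (Fin n)) (j : Fin (m + 1)) :
    reachable (satNet clause part tg) (ofAssignment part a Finset.univ ∅ j).marking
      (ofAssignment part a Finset.univ D j).marking := by
  induction D using Finset.induction_on with
  | empty => exact Relation.ReflTransGen.refl
  | insert i D hi ih =>
    exact Relation.ReflTransGen.trans ih (reachable_ofAssignment_insert_deleted hi j)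

theorem card_filter_eq_quota
    (htg : ∀ r, (Finset.univ.filter fun i => part i = r ∧ a i = true).card = tg r)
    (br : Bool × Fin k) :
    (Finset.univ.filter fun i => part i = br.2 ∧ a i = br.1).card = quota part tg br := by
  obtain ⟨_ | _, r⟩ := br
  · have := Finset.card_filter_add_card_filter_not (s := Finset.univ.filter fun i => part i = r)
      (fun i => a i = true)
    simp only [Finset.filter_filter, Bool.not_eq_true] at this
    simp only [quota, numIn, ← this, htg]
    omega
  · exact htg r

theorem reachable_target_of_goodAssign (h : GoodAssign clause part tg) :
    reachable (satNet clause part tg) satM0 satMtgt := by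
  obtain ⟨a, hsat, htg⟩ := h
  have hq := card_filter_eq_quota htg
  let C : Cfg n m k := ofAssignment part a Finset.univ Finset.univ (Fin.last m)
  have hfin : C.CanFire clause part tg .fin := ⟨rfl, rfl, hq⟩
  have hM : (C.next part .fin).marking = satMtgt := by
    funext p
    cases p <;> simp [C, Cfg.marking, Cfg.next, ofAssignment, satMtgt]
  rw [← ofAssignment_empty_marking (a := a), ← hM]
  exact (reachable_ofAssignment_live hq _).trans <|
    (reachable_ofAssignment_clausePos hsat _).trans <|
    (reachable_ofAssignment_deleted _ _).trans (Cfg.reachable_next hfin)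

end SatNet

/-- Correctness of the reduction from `p-Pw-Sat` to reachability in 1-safe Petri nets:
the target marking is reachable from the initial marking iff the instance has a
satisfying assignment meeting all the targets. -/
theorem satNet_reach_iff_goodAssign
    (clause : Fin m → Finset (Fin n × Bool)) (part : Fin n → Fin k)
    (tg : Fin k → ℕ) :
    reachable (satNet clause part tg) satM0 satMtgt ↔
      GoodAssign clause part tg := by
  refine ⟨fun h => ?_, SatNet.reachable_target_of_goodAssign⟩
  obtain ⟨C, hC, hM⟩ := SatNet.Cfg.exists_consistent_of_reachable h
  exact hC.goodAssign hM
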